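/- arXiv:2208.03313 — 3 statements merged into one kernel-verified Lean document; each statement's English description precedes it below -/
import Mathlib

section
/- Let $\lambda > 1$ and let $\lambda_{\max}$ be a real number satisfying $|\lambda_{\max} - \lambda - 1/\lambda| \le \Delta$ for some $\Delta$ with $0 \le \Delta \le \lambda + 1/\lambda$ and $\lambda_{\max} \ge 2$. Define $\widetilde{\lambda} = (\lambda_{\max} + \sqrt{\lambda_{\max}^2 - 4})/2$. Then $|\widetilde{\lambda} - \lambda| \le 4\Delta\lambda/(\lambda - 1)$. -/
/-!
With `μ = λ + 1/λ` one has `μ² - 4 = (λ - 1/λ)²`, so `λ` is the larger root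
`(μ + √(μ² - 4))/2` of `t² - μt + 1`, and `λ̃` is the same expression at `λmax`.
The square roots differ by at most `|λmax² - μ²| / √(μ² - 4) ≤ 3Δμ / (λ - 1/λ)`,
since `0 ≤ λmax + μ ≤ 3μ`; adding the `Δ/2` from the linear term leaves an
elementary inequality in `λ`.
-/

open Real

lemma abs_sqrt_sub_sqrt_le_div (a : ℝ) {b : ℝ} (hb : 0 < b) : |√a - √b| ≤ |a - b| / √b := by
  have hsb : 0 < √b := sqrt_pos.mpr hb
  rw [le_div_iff₀ hsb]
  rcases le_total a 0 with ha | ha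
  · rw [sqrt_eq_zero_of_nonpos ha, zero_sub, abs_neg, abs_of_pos hsb, mul_self_sqrt hb.le,
      abs_of_nonpos (by linarith)]
    linarith
  · have hsum : 0 < √a + √b := by positivity
    calc |√a - √b| * √b ≤ |√a - √b| * (√a + √b) := by gcongr; linarith [sqrt_nonneg a]
      _ = |a - b| := by
        rw [← abs_of_pos hsum, ← abs_mul]
        congr 1
        linear_combination sq_sqrt ha - sq_sqrt hb.le

/-- The larger root of `t ^ 2 - x * t + 1`. -/
noncomputable def largerRoot (x : ℝ) : ℝ := (x + √(x ^ 2 - 4)) / 2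

lemma abs_largerRoot_sub_le (x : ℝ) {y : ℝ} (hy : 0 < y ^ 2 - 4) :
    |largerRoot x - largerRoot y| ≤ |x - y| / 2 + |x ^ 2 - y ^ 2| / (2 * √(y ^ 2 - 4)) := by
  have hsplit : largerRoot x - largerRoot y = ((x - y) + (√(x ^ 2 - 4) - √(y ^ 2 - 4))) / 2 := by
    unfold largerRoot; ring
  have hsqrt := abs_sqrt_sub_sqrt_le_div (x ^ 2 - 4) hy
  rw [sub_sub_sub_cancel_right] at hsqrt
  rw [hsplit, abs_div, abs_two, mul_comm, ← div_div]
  linarith [abs_add_le (x - y) (√(x ^ 2 - 4) - √(y ^ 2 - 4))]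

lemma add_inv_sq_sub_four {x : ℝ} (hx : x ≠ 0) : (x + x⁻¹) ^ 2 - 4 = (x - x⁻¹) ^ 2 := by
  field_simp
  ring

lemma sub_inv_pos {x : ℝ} (hx : 1 < x) : 0 < x - x⁻¹ :=
  sub_pos.mpr ((inv_lt_one_of_one_lt₀ hx).trans hx)

lemma largerRoot_add_inv {x : ℝ} (hx : 1 < x) : largerRoot (x + x⁻¹) = x := by
  rw [largerRoot, add_inv_sq_sub_four (by positivity), sqrt_sq (sub_inv_pos hx).le]
  ring

lemma half_add_div_sub_inv_le {x Δ : ℝ} (hx : 1 < x) (hΔ : 0 ≤ Δ) :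
    Δ / 2 + Δ * (3 * (x + x⁻¹)) / (2 * (x - x⁻¹)) ≤ 4 * Δ * x / (x - 1) := by
  have hx1 : 0 < x - 1 := by linarith
  have hx2 : 0 < x ^ 2 - 1 := by nlinarith
  rw [show x - x⁻¹ = (x ^ 2 - 1) / x by field_simp]
  field_simp
  nlinarith [mul_nonneg (mul_nonneg hΔ hx1.le) (by nlinarith : (0 : ℝ) ≤ 4 * x ^ 2 + 8 * x - 2)]

theorem stmt_3_general (lam lammax Δ : ℝ) (hlam : 1 < lam)
    (hΔ : Δ ≤ lam + 1 / lam)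
    (habs : |lammax - lam - 1 / lam| ≤ Δ) :
    |(lammax + Real.sqrt (lammax ^ 2 - 4)) / 2 - lam| ≤ 4 * Δ * lam / (lam - 1) := by
  rw [one_div] at hΔ habs
  set μ := lam + lam⁻¹
  have hgap := sub_inv_pos hlam
  have hdist : |lammax - μ| ≤ Δ := by rwa [sub_sub] at habs
  have hsum : |lammax + μ| ≤ 3 * μ := by
    obtain ⟨hlow, hup⟩ := abs_le.mp hdist
    exact abs_le.mpr ⟨by linarith, by linarith⟩
  have hsq : |lammax ^ 2 - μ ^ 2| ≤ Δ * (3 * μ) := by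
    rw [sq_sub_sq, abs_mul, mul_comm]
    exact mul_le_mul hdist hsum (abs_nonneg _) ((abs_nonneg _).trans hdist)
  have hroot := abs_largerRoot_sub_le lammax (y := μ) (by rw [add_inv_sq_sub_four (by positivity)]; exact pow_pos hgap 2)
  rw [largerRoot_add_inv hlam, add_inv_sq_sub_four (by positivity),
    sqrt_sq hgap.le] at hroot
  calc |largerRoot lammax - lam| ≤ _ := hroot
    _ ≤ Δ / 2 + Δ * (3 * μ) / (2 * (lam - lam⁻¹)) := by gcongr
    _ ≤ 4 * Δ * lam / (lam - 1) :=
      half_add_div_sub_inv_le hlam ((abs_nonneg _).trans hdist)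

/-- If `λ > 1` and `λmax ≥ 2` satisfies `|λmax − λ − 1/λ| ≤ Δ` with
`0 ≤ Δ ≤ λ + 1/λ`, then `λ̃ = (λmax + √(λmax² − 4))/2` satisfies
`|λ̃ − λ| ≤ 4Δλ/(λ − 1)`. -/
theorem stmt_3 (lam lammax Δ : ℝ) (hlam : 1 < lam)
    (hΔ0 : 0 ≤ Δ) (hΔ : Δ ≤ lam + 1 / lam)
    (habs : |lammax - lam - 1 / lam| ≤ Δ) (h2 : 2 ≤ lammax) :
    |(lammax + Real.sqrt (lammax ^ 2 - 4)) / 2 - lam| ≤ 4 * Δ * lam / (lam - 1) :=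
  stmt_3_general lam lammax Δ hlam hΔ habs
end

section
/- For every real number $\alpha$ with $0 < \alpha \le 2$, the integral $\int \tanh(\alpha^2 + \alpha x)\,\varphi(dx)$ against the standard Gaussian density satisfies $c\,\alpha^2 \le \int \tanh(\alpha^2 + \alpha x)\,\varphi(dx) \le 2\alpha^2 + \alpha^4$ for some universal constant $c > 0$. -/
/-!
Since the standard Gaussian is symmetric, twice the integral equals the Gaussian integral of
`tanh (α² + αx) + tanh (α² - αx)`, which is the increment of `tanh` over `[αx - α², αx + α²]`.
By the mean value theorem this increment is `2α² / cosh² ξ` for some `ξ` in that interval: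
it is nonnegative and at most `2α²` everywhere, and at least `2α² / cosh² 6` for `|x| ≤ 1`.
-/

open MeasureTheory ProbabilityTheory Set NNReal

namespace Real

theorem hasDerivAt_tanh (x : ℝ) : HasDerivAt tanh (1 / cosh x ^ 2) x := by
  have h := (hasDerivAt_sinh x).div (hasDerivAt_cosh x) (cosh_pos x).ne'
  rw [show tanh = sinh / cosh from funext tanh_eq_sinh_div_cosh]
  refine h.congr_deriv ?_
  rw [← cosh_sq_sub_sinh_sq x]
  ring

theorem continuous_tanh : Continuous tanh :=
  continuous_iff_continuousAt.2 fun x ↦ (hasDerivAt_tanh x).continuousAt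

theorem exists_tanh_add_add_tanh_sub_eq (a : ℝ) {b : ℝ} (hb : 0 < b) :
    ∃ ξ ∈ Ioo (a - b) (a + b), tanh (b + a) + tanh (b - a) = 2 * b / cosh ξ ^ 2 := by
  obtain ⟨ξ, hξ, hslope⟩ := exists_hasDerivAt_eq_slope tanh (fun y ↦ 1 / cosh y ^ 2)
    (by linarith : a - b < a + b) continuous_tanh.continuousOn fun y _ ↦ hasDerivAt_tanh y
  refine ⟨ξ, hξ, ?_⟩
  rw [show a + b - (a - b) = 2 * b by ring] at hslope
  rw [show b - a = -(a - b) by ring, tanh_neg, add_comm b a,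
    show 2 * b / cosh ξ ^ 2 = 2 * b * (1 / cosh ξ ^ 2) by ring, hslope]
  field_simp
  ring

theorem tanh_add_add_tanh_sub_nonneg (a : ℝ) {b : ℝ} (hb : 0 < b) :
    0 ≤ tanh (b + a) + tanh (b - a) := by
  obtain ⟨ξ, -, h⟩ := exists_tanh_add_add_tanh_sub_eq a hb
  rw [h]
  positivity

theorem tanh_add_add_tanh_sub_le (a : ℝ) {b : ℝ} (hb : 0 < b) :
    tanh (b + a) + tanh (b - a) ≤ 2 * b := by
  obtain ⟨ξ, -, h⟩ := exists_tanh_add_add_tanh_sub_eq a hb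
  rw [h]
  exact div_le_self (by positivity) (one_le_pow₀ (one_le_cosh ξ))

theorem div_cosh_sq_le_tanh_add_add_tanh_sub {a b R : ℝ} (hb : 0 < b) (hR : |a| + b ≤ R) :
    2 * b / cosh R ^ 2 ≤ tanh (b + a) + tanh (b - a) := by
  obtain ⟨ξ, ⟨hξl, hξr⟩, h⟩ := exists_tanh_add_add_tanh_sub_eq a hb
  have hξ : |ξ| ≤ |R| :=
    (abs_le.2 ⟨by linarith [neg_abs_le a], by linarith [le_abs_self a]⟩).trans (le_abs_self R)
  rw [h]
  gcongr
  exact cosh_le_cosh.2 hξ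

end Real

theorem integrable_tanh_comp {α : Type*} [MeasurableSpace α] (μ : Measure α) [IsFiniteMeasure μ]
    {f : α → ℝ} (hf : Measurable f) : Integrable (fun x ↦ Real.tanh (f x)) μ :=
  .of_bound (Real.continuous_tanh.measurable.comp hf).aestronglyMeasurable 1
    (.of_forall fun x ↦ (Real.abs_tanh_lt_one (f x)).le)

theorem measurePreserving_neg_gaussianReal (v : ℝ≥0) :
    MeasurePreserving (MeasurableEquiv.neg ℝ) (gaussianReal 0 v) (gaussianReal 0 v) :=
  ⟨measurable_neg, by simpa using gaussianReal_map_neg (μ := 0) (v := v)⟩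

theorem two_mul_integral_gaussianReal_eq_integral_add_comp_neg (v : ℝ≥0) {f : ℝ → ℝ}
    (hf : Integrable f (gaussianReal 0 v)) :
    2 * ∫ x, f x ∂gaussianReal 0 v = ∫ x, f x + f (-x) ∂gaussianReal 0 v := by
  have hneg := measurePreserving_neg_gaussianReal v
  have hf' : Integrable (fun x ↦ f (-x)) (gaussianReal 0 v) :=
    (hneg.integrable_comp_emb (MeasurableEquiv.neg ℝ).measurableEmbedding).2 hf
  rw [integral_add hf hf', two_mul]
  exact congrArg _ (hneg.integral_comp' f).symm

theorem gaussianReal_pos (μ : ℝ) {v : ℝ≥0} (hv : v ≠ 0) {s : Set ℝ} (hs : 0 < volume s) :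
    0 < gaussianReal μ v s :=
  pos_iff_ne_zero.2 fun h ↦ hs.ne' (gaussianReal_absolutelyContinuous' μ hv h)

theorem indicator_Icc_le_tanh_add_add_tanh_sub {α : ℝ} (hα : 0 < α) (hα2 : α ≤ 2) (x : ℝ) :
    (Icc (-1) 1).indicator (fun _ ↦ 2 * α ^ 2 / Real.cosh 6 ^ 2) x
      ≤ Real.tanh (α ^ 2 + α * x) + Real.tanh (α ^ 2 - α * x) := by
  have hb : 0 < α ^ 2 := by positivity
  by_cases hx : x ∈ Icc (-1 : ℝ) 1
  · rw [indicator_of_mem hx]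
    refine Real.div_cosh_sq_le_tanh_add_add_tanh_sub hb ?_
    rw [abs_mul, abs_of_pos hα]
    nlinarith [abs_le.2 hx, abs_nonneg x]
  · rw [indicator_of_notMem hx]
    exact Real.tanh_add_add_tanh_sub_nonneg _ hb

/-- For `0 < α ≤ 2`, the standard Gaussian integral of `tanh(α² + αx)` is of order `α²`:
it is bounded below by `c·α²` for a universal constant `c > 0` and above by `2α² + α⁴`. -/
theorem stmt_4 :
    ∃ c : ℝ, 0 < c ∧ ∀ α : ℝ, 0 < α → α ≤ 2 →
      c * α ^ 2 ≤ ∫ x, Real.tanh (α ^ 2 + α * x) ∂(gaussianReal 0 1) ∧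
      ∫ x, Real.tanh (α ^ 2 + α * x) ∂(gaussianReal 0 1) ≤ 2 * α ^ 2 + α ^ 4 := by
  set m := (gaussianReal 0 1).real (Icc (-1 : ℝ) 1)
  have hm : 0 < m := ENNReal.toReal_pos
    (gaussianReal_pos 0 one_ne_zero (by simp [Real.volume_Icc])).ne' (measure_ne_top _ _)
  refine ⟨m / Real.cosh 6 ^ 2, by positivity, fun α hα hα2 ↦ ?_⟩
  have hsym := two_mul_integral_gaussianReal_eq_integral_add_comp_neg 1
    (integrable_tanh_comp (gaussianReal 0 1) (by fun_prop : Measurable fun x ↦ α ^ 2 + α * x))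
  simp only [mul_neg, ← sub_eq_add_neg] at hsym
  have hg : Integrable (fun x ↦ Real.tanh (α ^ 2 + α * x) + Real.tanh (α ^ 2 - α * x))
      (gaussianReal 0 1) :=
    (integrable_tanh_comp _ (by fun_prop)).add (integrable_tanh_comp _ (by fun_prop))
  constructor
  · have hlow := integral_mono ((integrable_const _).indicator measurableSet_Icc) hg
      (indicator_Icc_le_tanh_add_add_tanh_sub hα hα2)
    rw [integral_indicator_const _ measurableSet_Icc, smul_eq_mul] at hlow
    calc m / Real.cosh 6 ^ 2 * α ^ 2 = m * (2 * α ^ 2 / Real.cosh 6 ^ 2) / 2 := by ring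
      _ ≤ _ := by linarith
  · have hup := integral_mono hg (integrable_const (2 * α ^ 2))
      fun x ↦ Real.tanh_add_add_tanh_sub_le (α * x) (by positivity)
    simp only [integral_const, probReal_univ, one_smul] at hup
    nlinarith
end

section
/- Let $X$ be a random variable uniformly distributed on $\{+1,-1\}$, $Z\sim\mathcal{N}(0,1)$ independent of $X$, and let $\tau > 0$. Then $\frac{(\mathbb{E}[\tanh(\tau X + \sqrt{\tau} Z) \cdot X])^2}{\mathbb{E}[\tanh^2(\tau X + \sqrt{\tau} Z)]} \ge \frac{(\mathbb{E}[(\tau X + \sqrt{\tau} Z)X])^2}{\mathbb{E}[(\tau X + \sqrt{\tau} Z)^2]} = \frac{\tau}{\tau + 1}$. -/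
/-!
Write `Y = τ + √τ · XZ`. Since `X = ±1`, we have `τX + √τZ = X · Y`, so for odd `h` the random
variables `h(τX + √τZ) · X` and `h(τX + √τZ)²` equal `h(Y)` and `h(Y)²`; and `XZ ~ N(0,1)` because
the standard Gaussian is symmetric, so `Y ~ N(τ, τ)`. The density `p` of `N(v, v)` satisfies
`p(-y) = e^{-2y} p(y)`, and `e^{-2y}(1 + tanh y) = 1 - tanh y`; together these give the Nishimori
identity `E[φ(Y) tanh Y] = E[φ(Y)]` for every odd integrable `φ`. With `φ = tanh` it reads
`E[tanh² Y] = E[tanh Y]`, so the left-hand ratio equals `E[tanh² Y]`; with `φ = id` it gives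
`E[Y tanh Y] = τ`, and Cauchy–Schwarz against `E[Y²] = τ² + τ` yields `E[tanh² Y] ≥ τ / (τ + 1)`.
-/

open MeasureTheory ProbabilityTheory Real
open scoped NNReal ENNReal

theorem Real.continuous_tanh_s7 : Continuous tanh := by
  simp only [funext tanh_eq_sinh_div_cosh]
  exact continuous_sinh.div continuous_cosh fun x => (cosh_pos x).ne'

theorem Real.exp_neg_two_mul_mul_one_add_tanh (y : ℝ) :
    exp (-(2 * y)) * (1 + tanh y) = 1 - tanh y := by
  have hc : cosh y ≠ 0 := (cosh_pos y).ne'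
  rw [tanh_eq_sinh_div_cosh, sinh_eq, cosh_eq] at *
  have h1 : exp y * exp (-y) = 1 := by rw [← exp_add]; simp
  have h2 : exp (-(2 * y)) = exp (-y) * exp (-y) := by rw [← exp_add]; ring_nf
  field_simp
  linear_combination 2 * exp y * h2 + 2 * exp (-y) * h1

lemma memLp_tanh (μ : Measure ℝ) [IsFiniteMeasure μ] (p : ℝ≥0∞) : MemLp tanh p μ :=
  MemLp.of_bound continuous_tanh_s7.aestronglyMeasurable 1
    (ae_of_all _ fun y => (abs_tanh_lt_one y).le)

lemma sq_integral_mul_le_integral_sq_mul_integral_sq {α : Type*} [MeasurableSpace α]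
    {μ : Measure α} {f g : α → ℝ} (hf : MemLp f 2 μ) (hg : MemLp g 2 μ) :
    (∫ x, f x * g x ∂μ) ^ 2 ≤ (∫ x, f x ^ 2 ∂μ) * ∫ x, g x ^ 2 ∂μ := by
  have hfg : Integrable (fun x => f x * g x) μ := hf.integrable_mul hg
  have hquad : ∀ t : ℝ, 0 ≤ (∫ x, g x ^ 2 ∂μ) * (t * t) + (-2 * ∫ x, f x * g x ∂μ) * t
      + ∫ x, f x ^ 2 ∂μ := by
    intro t
    calc 0 ≤ ∫ x, (f x - t * g x) ^ 2 ∂μ := integral_nonneg fun x => sq_nonneg _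
      _ = ∫ x, (f x ^ 2 - 2 * t * (f x * g x) + t ^ 2 * g x ^ 2) ∂μ := by
        congr 1 with x; ring
      _ = _ := by
        have hlin : Integrable (fun x => f x ^ 2 - 2 * t * (f x * g x)) μ :=
          hf.integrable_sq.sub (hfg.const_mul _)
        rw [integral_add hlin (hg.integrable_sq.const_mul _),
          integral_sub hf.integrable_sq (hfg.const_mul _), integral_const_mul, integral_const_mul]
        ring
  have hdiscrim := discrim_le_zero hquad
  rw [discrim] at hdiscrim
  linarith

lemma integral_sq_gaussianReal (m : ℝ) (v : ℝ≥0) :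
    ∫ y, y ^ 2 ∂gaussianReal m v = m ^ 2 + v := by
  have h := variance_eq_sub (memLp_id_gaussianReal (μ := m) (v := v) 2)
  simp only [variance_id_gaussianReal, integral_id_gaussianReal, Pi.pow_apply, id] at h
  linarith

lemma gaussianPDFReal_neg_self (v : ℝ≥0) (y : ℝ) :
    gaussianPDFReal v v (-y) = exp (-(2 * y)) * gaussianPDFReal v v y := by
  rcases eq_or_ne v 0 with rfl | hv
  · simp
  have hv' : (v : ℝ) ≠ 0 := by exact_mod_cast hv
  rw [gaussianPDFReal, gaussianPDFReal, mul_left_comm, ← exp_add]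
  congr 2
  field_simp
  ring

lemma integral_comp_neg_gaussianReal_self (v : ℝ≥0) (f : ℝ → ℝ) :
    ∫ y, f (-y) ∂gaussianReal v v = ∫ y, exp (-(2 * y)) * f y ∂gaussianReal v v := by
  rcases eq_or_ne v 0 with rfl | hv
  · simp [gaussianReal_zero_var]
  rw [integral_gaussianReal_eq_integral_smul hv, integral_gaussianReal_eq_integral_smul hv,
    ← integral_neg_eq_self]
  simp only [neg_neg, gaussianPDFReal_neg_self, smul_eq_mul]
  congr 1 with y
  ring

lemma integral_mul_one_sub_tanh_gaussianReal_self (v : ℝ≥0) {φ : ℝ → ℝ}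
    (hφ : ∀ y, φ (-y) = -φ y) :
    ∫ y, φ y * (1 - tanh y) ∂gaussianReal v v = 0 := by
  -- the reflection `y ↦ -y` maps `φ (1 + tanh)` to `-φ (1 - tanh)` and multiplies the density
  -- by `e^{-2y}`, which turns `φ (1 + tanh)` into `φ (1 - tanh)`
  have h := integral_comp_neg_gaussianReal_self v fun y => φ y * (1 + tanh y)
  simp only [hφ, tanh_neg, mul_left_comm (exp _), exp_neg_two_mul_mul_one_add_tanh,
    ← sub_eq_add_neg, neg_mul, integral_neg] at h
  linarith

lemma integral_mul_tanh_gaussianReal_self {v : ℝ≥0} {φ : ℝ → ℝ} (hφ : ∀ y, φ (-y) = -φ y)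
    (hφi : Integrable φ (gaussianReal v v)) :
    ∫ y, φ y * tanh y ∂gaussianReal v v = ∫ y, φ y ∂gaussianReal v v := by
  have hφt : Integrable (fun y => φ y * tanh y) (gaussianReal v v) :=
    hφi.mul_bdd continuous_tanh_s7.aestronglyMeasurable
      (ae_of_all _ fun y => (abs_tanh_lt_one y).le)
  have h := integral_mul_one_sub_tanh_gaussianReal_self v hφ
  simp only [mul_sub, mul_one] at h
  rw [integral_sub hφi hφt] at h
  linarith

lemma integral_tanh_sq_gaussianReal_self (v : ℝ≥0) :
    ∫ y, tanh y ^ 2 ∂gaussianReal v v = ∫ y, tanh y ∂gaussianReal v v := by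
  simp only [sq]
  exact integral_mul_tanh_gaussianReal_self tanh_neg ((memLp_tanh _ 1).integrable le_rfl)

lemma div_add_one_le_integral_tanh_sq_gaussianReal_self (v : ℝ≥0) :
    v / (v + 1) ≤ ∫ y, tanh y ^ 2 ∂gaussianReal v v := by
  rcases eq_or_ne v 0 with rfl | hv
  · simp
  have hcs := sq_integral_mul_le_integral_sq_mul_integral_sq
    (memLp_id_gaussianReal (μ := (v : ℝ)) (v := v) 2) (memLp_tanh _ 2)
  have hcorr : ∫ y, y * tanh y ∂gaussianReal v v = v := by
    rw [integral_mul_tanh_gaussianReal_self (φ := fun y => y) (fun y => rfl)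
      ((memLp_id_gaussianReal 1).integrable le_rfl), integral_id_gaussianReal]
  simp only [id, hcorr, integral_sq_gaussianReal] at hcs
  have hv : (0 : ℝ) < v := by positivity
  rw [div_le_iff₀ (by positivity)]
  nlinarith

lemma rademacher_mconv_of_map_neg {μ : Measure ℝ} [SFinite μ] (hμ : μ.map (fun x => -x) = μ) :
    ((2⁻¹ : ℝ≥0∞) • Measure.dirac (1 : ℝ) + (2⁻¹ : ℝ≥0∞) • Measure.dirac (-1 : ℝ)) ∗ₘ μ = μ := by
  rw [Measure.add_mconv, Measure.mconv_smul_left, Measure.mconv_smul_left,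
    Measure.dirac_one_mconv, Measure.dirac_mconv]
  simp only [neg_one_mul, hμ, ← add_smul, ENNReal.inv_two_add_inv_two, one_smul]

section Rademacher

variable {Ω : Type*} [MeasurableSpace Ω] {P : Measure Ω} {X : Ω → ℝ}

lemma ae_eq_one_or_eq_neg_one (hXm : Measurable X)
    (hX : P.map X = (2⁻¹ : ℝ≥0∞) • Measure.dirac (1 : ℝ) + (2⁻¹ : ℝ≥0∞) • Measure.dirac (-1 : ℝ)) :
    ∀ᵐ ω ∂P, X ω = 1 ∨ X ω = -1 := by
  have hs : MeasurableSet {x : ℝ | x = 1 ∨ x = -1} :=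
    (measurableSet_singleton 1).union (measurableSet_singleton (-1))
  rw [← ae_map_iff hXm.aemeasurable hs, hX]
  refine ae_add_measure_iff.2 ⟨Measure.ae_smul_measure ?_ _, Measure.ae_smul_measure ?_ _⟩ <;>
    simp

lemma hasLaw_mul_of_rademacher [IsFiniteMeasure P] {Z : Ω → ℝ} {μ : Measure ℝ} [SigmaFinite μ]
    (hXm : Measurable X)
    (hX : P.map X = (2⁻¹ : ℝ≥0∞) • Measure.dirac (1 : ℝ) + (2⁻¹ : ℝ≥0∞) • Measure.dirac (-1 : ℝ))
    (hZ : HasLaw Z μ P) (hμ : μ.map (fun x => -x) = μ) (hXZ : IndepFun X Z P) :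
    HasLaw (fun ω => X ω * Z ω) μ P := by
  have h := hXZ.hasLaw_fun_mul (μ := P.map X) ⟨hXm.aemeasurable, rfl⟩ hZ
  rwa [hX, rademacher_mconv_of_map_neg hμ] at h

lemma integral_odd_comp_sign_mul {S Y : Ω → ℝ} {ν : Measure ℝ}
    (hX : ∀ᵐ ω ∂P, X ω = 1 ∨ X ω = -1) (hS : ∀ᵐ ω ∂P, S ω = X ω * Y ω) (hY : HasLaw Y ν P)
    {h : ℝ → ℝ} (hodd : ∀ y, h (-y) = -h y) (hh : Continuous h) :
    ∫ ω, h (S ω) * X ω ∂P = ∫ y, h y ∂ν ∧ ∫ ω, h (S ω) ^ 2 ∂P = ∫ y, h y ^ 2 ∂ν := by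
  constructor
  · rw [← hY.integral_comp hh.aestronglyMeasurable]
    refine integral_congr_ae ((hX.and hS).mono fun ω ⟨hω, hSω⟩ => ?_)
    rcases hω with hω | hω <;> simp [hSω, hω, hodd]
  · rw [← hY.integral_comp (f := fun y => h y ^ 2) (hh.pow 2).aestronglyMeasurable]
    refine integral_congr_ae ((hX.and hS).mono fun ω ⟨hω, hSω⟩ => ?_)
    rcases hω with hω | hω <;> simp [hSω, hω, hodd]

end Rademacher

lemma hasLaw_add_sqrt_mul_gaussianReal {Ω : Type*} [MeasurableSpace Ω] {P : Measure Ω}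
    {W : Ω → ℝ} (hW : HasLaw W (gaussianReal 0 1) P) (v : ℝ≥0) :
    HasLaw (fun ω => v + √v * W ω) (gaussianReal v v) P := by
  convert gaussianReal_const_add (gaussianReal_const_mul hW √v) (v : ℝ) using 2
  · simp
  · ext; simp

/-- For `X` uniform on `{±1}` and `Z ~ N(0,1)` independent, the normalized correlation of
the MMSE estimator `tanh(τX + √τ Z)` with `X` dominates that of the linear estimator
`τX + √τ Z`, which equals `τ/(τ+1)`. -/
theorem stmt_7 {Ω : Type*} [MeasureSpace Ω]
    [IsProbabilityMeasure (ℙ : Measure Ω)]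
    (X Z : Ω → ℝ) (hXm : Measurable X) (hZm : Measurable Z)
    (hX : Measure.map X ℙ =
      (2⁻¹ : ENNReal) • Measure.dirac (1 : ℝ) + (2⁻¹ : ENNReal) • Measure.dirac (-1 : ℝ))
    (hZ : Measure.map Z ℙ = gaussianReal 0 1)
    (hindep : IndepFun X Z ℙ) (τ : ℝ) (hτ : 0 < τ) :
    (∫ ω, (τ * X ω + Real.sqrt τ * Z ω) * X ω) ^ 2 /
        (∫ ω, (τ * X ω + Real.sqrt τ * Z ω) ^ 2) = τ / (τ + 1) ∧
    (∫ ω, Real.tanh (τ * X ω + Real.sqrt τ * Z ω) * X ω) ^ 2 /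
        (∫ ω, Real.tanh (τ * X ω + Real.sqrt τ * Z ω) ^ 2) ≥ τ / (τ + 1) := by
  lift τ to ℝ≥0 using hτ.le
  have hXae := ae_eq_one_or_eq_neg_one hXm hX
  have hW := hasLaw_mul_of_rademacher hXm hX ⟨hZm.aemeasurable, hZ⟩
    (by simp [gaussianReal_map_neg]) hindep
  have hY := hasLaw_add_sqrt_mul_gaussianReal hW τ
  have hS : ∀ᵐ ω ∂ℙ, τ * X ω + √τ * Z ω = X ω * (τ + √τ * (X ω * Z ω)) :=
    hXae.mono fun ω hω => by rcases hω with hω | hω <;> rw [hω] <;> ring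
  obtain ⟨hcorr, hsq⟩ := integral_odd_comp_sign_mul (h := fun y => y) hXae hS hY (fun y => rfl)
    continuous_id
  obtain ⟨hcorr_tanh, hsq_tanh⟩ :=
    integral_odd_comp_sign_mul hXae hS hY tanh_neg continuous_tanh_s7
  have hB := div_add_one_le_integral_tanh_sq_gaussianReal_self τ
  rw [integral_tanh_sq_gaussianReal_self] at hB
  refine ⟨?_, ?_⟩
  · rw [hcorr, hsq, integral_id_gaussianReal, integral_sq_gaussianReal,
      div_eq_div_iff (by positivity) (by positivity)]
    ring
  · rw [hcorr_tanh, hsq_tanh, integral_tanh_sq_gaussianReal_self, sq,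
      mul_div_cancel_right₀ _ (lt_of_lt_of_le (by positivity) hB).ne']
    exact hB
end
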